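/- The map replacing, in a Dyck path avoiding the factor UUU, each occurrence of UUD by a single up step and each remaining UD by a flat step, is a bijection from Dyck paths of semilength n avoiding UUU to Motzkin paths of length n. -/

import Mathlib

/-- Every prefix of the path has nonnegative sum (the path stays weakly above the x-axis). -/
def NonnegPrefixes (w : List ℤ) : Prop := ∀ p ∈ w.inits, 0 ≤ p.sum

/-- A Dyck word: steps U = 1 and D = -1, nonnegative prefixes, ending at height 0. -/
def IsDyckWord (w : List ℤ) : Prop :=
  (∀ s ∈ w, s = 1 ∨ s = -1) ∧ NonnegPrefixes w ∧ w.sum = 0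

/-- A Motzkin path: steps U = 1, F = 0, D = -1, nonnegative prefixes, ending at height 0. -/
def IsMotzkinWord (w : List ℤ) : Prop :=
  (∀ s ∈ w, s = 1 ∨ s = 0 ∨ s = -1) ∧ NonnegPrefixes w ∧ w.sum = 0

/-- A Dyck meander with catastrophes: steps U = 1, D = -1, D_i = -i (i ≥ 2),
nonnegative, and every catastrophe step D_i (i ≥ 2) lands exactly at height 0. -/
def IsDyckMeanderCat (w : List ℤ) : Prop :=
  (∀ s ∈ w, s = 1 ∨ s ≤ -1) ∧ NonnegPrefixes w ∧
    ∀ i, i < w.length → w.getD i 0 ≤ -2 → (w.take (i+1)).sum = 0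

/-- A Motzkin meander with catastrophes: steps U = 1, F = 0, D = -1, D_i = -i (i ≥ 2),
nonnegative, every catastrophe landing exactly at height 0. -/
def IsMotzkinMeanderCat (w : List ℤ) : Prop :=
  (∀ s ∈ w, s ≤ 1) ∧ NonnegPrefixes w ∧
    ∀ i, i < w.length → w.getD i 0 ≤ -2 → (w.take (i+1)).sum = 0

def IsDyckExcursionCat (w : List ℤ) : Prop := IsDyckMeanderCat w ∧ w.sum = 0

def IsMotzkinExcursionCat (w : List ℤ) : Prop := IsMotzkinMeanderCat w ∧ w.sum = 0

/-- The factor `pat` occurs in `w` starting at position `i`. -/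
def OccursAt (pat w : List ℤ) (i : ℕ) : Prop := pat <+: w.drop i

/-- `w` has no occurrence of the factor `pat`. -/
def Avoids (pat w : List ℤ) : Prop := ∀ i, ¬ OccursAt pat w i

/-- `w` has no occurrence of `pat` starting at height h > 0. -/
def AvoidsAtPosHeight (pat w : List ℤ) : Prop :=
  ∀ i, OccursAt pat w i → (w.take i).sum ≤ 0

/-- `w` has no occurrence of `pat` starting at height h ≥ 2. -/
def AvoidsAtHeightGe2 (pat w : List ℤ) : Prop :=
  ∀ i, OccursAt pat w i → (w.take i).sum < 2

def pUUU : List ℤ := [1, 1, 1]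
def pDUD : List ℤ := [-1, 1, -1]
def pUUD : List ℤ := [1, 1, -1]
def pUD : List ℤ := [1, -1]
def pDU : List ℤ := [-1, 1]

/-- The map replacing each occurrence of UUD by an up step U and each remaining UD
by a flat step F (reading greedily from the left), from Dyck words to Motzkin words. -/
def dyckToMotzkin : List ℤ → List ℤ
  | 1 :: 1 :: -1 :: rest => 1 :: dyckToMotzkin rest
  | 1 :: -1 :: rest => 0 :: dyckToMotzkin rest
  | x :: rest => x :: dyckToMotzkin rest
  | [] => []

/-! The inverse map substitutes U ↦ UUD, F ↦ UD, D ↦ D. Every block ends in D and has at most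
two consecutive U's, so the image avoids UUU; each block stays weakly above the lower of its two
end heights, so the image is a Dyck path exactly when the word is a Motzkin path. Conversely a
UUU-avoiding Dyck path splits greedily into such blocks: after UU the next step must be D, and
the path does not end in U. -/

def motzkinStep (x : ℤ) : List ℤ := if x = 1 then [1, 1, -1] else if x = 0 then [1, -1] else [x]

def motzkinToDyck (m : List ℤ) : List ℤ := m.flatMap motzkinStep

def NonnegPrefixesFrom (h : ℤ) (w : List ℤ) : Prop := ∀ p ∈ w.inits, 0 ≤ h + p.sum

theorem getLast?_ne_of_cons_ne {α : Type*} {a b : α} {l : List α}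
    (h : (a :: l).getLast? ≠ some b) : l.getLast? ≠ some b := by
  cases l <;> simp_all

theorem avoids_cons_iff {pat : List ℤ} {a : ℤ} {w : List ℤ} :
    Avoids pat (a :: w) ↔ ¬ pat <+: a :: w ∧ Avoids pat w := by
  simp only [Avoids, OccursAt]
  constructor
  · intro h
    exact ⟨h 0, fun i => h (i + 1)⟩
  · rintro ⟨h0, h⟩ (_ | i)
    exacts [h0, h i]

theorem nonnegPrefixesFrom_zero_iff {w : List ℤ} :
    NonnegPrefixesFrom 0 w ↔ NonnegPrefixes w := by
  simp [NonnegPrefixesFrom, NonnegPrefixes]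

theorem NonnegPrefixesFrom.nonneg {h : ℤ} {w : List ℤ} (hw : NonnegPrefixesFrom h w) :
    0 ≤ h := by
  simpa using hw [] (by simp)

theorem nonnegPrefixesFrom_nil {h : ℤ} : NonnegPrefixesFrom h [] ↔ 0 ≤ h := by
  simp [NonnegPrefixesFrom]

theorem nonnegPrefixesFrom_cons {h a : ℤ} {l : List ℤ} :
    NonnegPrefixesFrom h (a :: l) ↔ 0 ≤ h ∧ NonnegPrefixesFrom (h + a) l := by
  simp [NonnegPrefixesFrom, add_assoc]

theorem nonnegPrefixesFrom_append {h : ℤ} {u v : List ℤ} :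
    NonnegPrefixesFrom h (u ++ v) ↔ NonnegPrefixesFrom h u ∧ NonnegPrefixesFrom (h + u.sum) v := by
  induction u generalizing h with
  | nil => simpa [nonnegPrefixesFrom_nil] using fun hv => hv.nonneg
  | cons a u ih =>
    simp only [List.cons_append, nonnegPrefixesFrom_cons, ih, List.sum_cons, add_assoc, and_assoc]

theorem motzkinToDyck_cons (x : ℤ) (m : List ℤ) :
    motzkinToDyck (x :: m) = motzkinStep x ++ motzkinToDyck m :=
  List.flatMap_cons

theorem sum_motzkinStep (x : ℤ) : (motzkinStep x).sum = x := by
  unfold motzkinStep; split_ifs <;> simp [*]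

theorem sum_motzkinToDyck (m : List ℤ) : (motzkinToDyck m).sum = m.sum := by
  induction m with
  | nil => rfl
  | cons x m ih => simp [motzkinToDyck_cons, sum_motzkinStep, ih]

theorem nonnegPrefixesFrom_motzkinStep (h x : ℤ) :
    NonnegPrefixesFrom h (motzkinStep x) ↔ NonnegPrefixesFrom h [x] := by
  unfold motzkinStep
  split_ifs <;> simp [nonnegPrefixesFrom_cons, nonnegPrefixesFrom_nil, *] <;> omega

theorem nonnegPrefixesFrom_motzkinToDyck (h : ℤ) (m : List ℤ) :
    NonnegPrefixesFrom h (motzkinToDyck m) ↔ NonnegPrefixesFrom h m := by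
  induction m generalizing h with
  | nil => rfl
  | cons x m ih =>
    rw [motzkinToDyck_cons, nonnegPrefixesFrom_append, nonnegPrefixesFrom_motzkinStep,
      sum_motzkinStep, ih, nonnegPrefixesFrom_cons (l := m), nonnegPrefixesFrom_cons,
      nonnegPrefixesFrom_nil]
    exact ⟨fun ⟨⟨hh, _⟩, hm⟩ => ⟨hh, hm⟩, fun ⟨hh, hm⟩ => ⟨⟨hh, hm.nonneg⟩, hm⟩⟩

theorem dyckToMotzkin_cons_of_ne_one {x : ℤ} (hx : x ≠ 1) (w : List ℤ) :
    dyckToMotzkin (x :: w) = x :: dyckToMotzkin w :=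
  dyckToMotzkin.eq_3 x w (fun _ h _ => hx h) (fun _ h _ => hx h)

theorem dyckToMotzkin_motzkinToDyck (m : List ℤ) : dyckToMotzkin (motzkinToDyck m) = m := by
  induction m with
  | nil => rfl
  | cons x m ih =>
    rw [motzkinToDyck_cons, motzkinStep]
    split_ifs with h1 h0
    · simp [h1, dyckToMotzkin, ih]
    · simp [h0, dyckToMotzkin, ih]
    · simp [dyckToMotzkin_cons_of_ne_one h1, ih]

theorem avoids_pUUU_motzkinToDyck (m : List ℤ) : Avoids pUUU (motzkinToDyck m) := by
  induction m with
  | nil => simp [Avoids, OccursAt, motzkinToDyck, pUUU]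
  | cons x m ih =>
    rw [motzkinToDyck_cons, motzkinStep]
    simp only [pUUU] at ih ⊢
    split_ifs with h1
    · simp [avoids_cons_iff, ih]
    · simp [avoids_cons_iff, ih]
    · simp [avoids_cons_iff, ih, Ne.symm h1]

theorem motzkinStep_steps_iff (x : ℤ) :
    (∀ s ∈ motzkinStep x, s = 1 ∨ s = -1) ↔ x = 1 ∨ x = 0 ∨ x = -1 := by
  unfold motzkinStep; split_ifs <;> simp <;> omega

theorem motzkinToDyck_steps_iff (m : List ℤ) :
    (∀ s ∈ motzkinToDyck m, s = 1 ∨ s = -1) ↔ ∀ x ∈ m, x = 1 ∨ x = 0 ∨ x = -1 := by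
  simp_rw [← motzkinStep_steps_iff, motzkinToDyck, List.mem_flatMap]
  exact ⟨fun h x hx s hs => h s ⟨x, hx, hs⟩, fun h s ⟨x, hx, hs⟩ => h x hx s hs⟩

theorem isDyckWord_motzkinToDyck_iff (m : List ℤ) :
    IsDyckWord (motzkinToDyck m) ↔ IsMotzkinWord m := by
  rw [IsDyckWord, IsMotzkinWord, motzkinToDyck_steps_iff, sum_motzkinToDyck,
    ← nonnegPrefixesFrom_zero_iff, ← nonnegPrefixesFrom_zero_iff,
    nonnegPrefixesFrom_motzkinToDyck]

theorem length_motzkinToDyck {m : List ℤ} (hm : ∀ x ∈ m, x = 1 ∨ x = 0 ∨ x = -1) :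
    ((motzkinToDyck m).length : ℤ) = 2 * m.length + m.sum := by
  induction m with
  | nil => rfl
  | cons x m ih =>
    rw [List.forall_mem_cons] at hm
    rcases hm with ⟨hx | hx | hx, hm⟩ <;> simp [motzkinToDyck_cons, motzkinStep, hx, ih hm] <;> ring

theorem IsMotzkinWord.length_motzkinToDyck {m : List ℤ} (hm : IsMotzkinWord m) :
    (motzkinToDyck m).length = 2 * m.length := by
  have := _root_.length_motzkinToDyck hm.1
  rw [hm.2.2] at this
  omega

theorem motzkinToDyck_dyckToMotzkin {w : List ℤ} (hw : ∀ s ∈ w, s = 1 ∨ s = -1)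
    (hav : Avoids pUUU w) (hlast : w.getLast? ≠ some 1) :
    motzkinToDyck (dyckToMotzkin w) = w := by
  induction w using dyckToMotzkin.induct with
  | case1 w ih =>
    simp only [List.forall_mem_cons, avoids_cons_iff] at hw hav
    rw [dyckToMotzkin, motzkinToDyck_cons, ih hw.2.2.2 hav.2.2.2
      (getLast?_ne_of_cons_ne (getLast?_ne_of_cons_ne (getLast?_ne_of_cons_ne hlast)))]
    rfl
  | case2 w ih =>
    simp only [List.forall_mem_cons, avoids_cons_iff] at hw hav
    rw [dyckToMotzkin, motzkinToDyck_cons,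
      ih hw.2.2 hav.2.2 (getLast?_ne_of_cons_ne (getLast?_ne_of_cons_ne hlast))]
    rfl
  | case3 x w hUUD hUD ih =>
    rcases hw x (by simp) with rfl | rfl
    · -- a U that starts neither UUD nor UD starts UUU or ends the word in U
      exfalso
      rcases w with _ | ⟨y, w⟩
      · simp at hlast
      rcases hw y (by simp) with rfl | rfl
      · rcases w with _ | ⟨z, w⟩
        · simp at hlast
        rcases hw z (by simp) with rfl | rfl
        · exact hav 0 ⟨w, rfl⟩
        · exact hUUD w rfl rfl
      · exact hUD w rfl rfl
    · simp only [List.forall_mem_cons, avoids_cons_iff] at hw hav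
      rw [dyckToMotzkin_cons_of_ne_one (by norm_num), motzkinToDyck_cons,
        ih hw.2 hav.2 (getLast?_ne_of_cons_ne hlast)]
      rfl
  | case4 => rfl

theorem IsDyckWord.getLast?_ne_one {w : List ℤ} (hw : IsDyckWord w) : w.getLast? ≠ some 1 := by
  rintro hlast
  obtain ⟨v, rfl⟩ := List.getLast?_eq_some_iff.1 hlast
  have hv : 0 ≤ v.sum := hw.2.1 v (by simp)
  have := hw.2.2
  simp at this
  omega

theorem IsDyckWord.motzkinToDyck_dyckToMotzkin {w : List ℤ} (hw : IsDyckWord w)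
    (hav : Avoids pUUU w) : motzkinToDyck (dyckToMotzkin w) = w :=
  _root_.motzkinToDyck_dyckToMotzkin hw.1 hav hw.getLast?_ne_one

/-- Replacing each UUD by U and each remaining UD by F is a bijection from Dyck paths
of semilength n avoiding UUU to Motzkin paths of length n. -/
theorem stmt_10 (n : ℕ) :
    Set.BijOn dyckToMotzkin
      {w | IsDyckWord w ∧ w.length = 2 * n ∧ Avoids pUUU w}
      {w | IsMotzkinWord w ∧ w.length = n} := by
  refine Set.InvOn.bijOn ⟨fun w ⟨hw, _, hav⟩ => hw.motzkinToDyck_dyckToMotzkin hav,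
    fun m _ => dyckToMotzkin_motzkinToDyck m⟩ ?_ ?_
  · rintro w ⟨hw, hlen, hav⟩
    have hwm := hw.motzkinToDyck_dyckToMotzkin hav
    have hm : IsMotzkinWord (dyckToMotzkin w) := by
      rwa [← isDyckWord_motzkinToDyck_iff, hwm]
    have hlen' := hm.length_motzkinToDyck
    rw [hwm] at hlen'
    exact ⟨hm, by omega⟩
  · rintro m ⟨hm, rfl⟩
    exact ⟨(isDyckWord_motzkinToDyck_iff m).2 hm, hm.length_motzkinToDyck,
      avoids_pUUU_motzkinToDyck m⟩
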